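/- arXiv:2206.12814 — 3 statements merged into one kernel-verified Lean document; each statement's English description precedes it below -/
import Mathlib

section
/- The set of pairs (z₁, z₂) ∈ ℂ² satisfying |z₁ + iz₂| = |z₁ − iz₂| = 1 equals the set {(e^{it} cos s, e^{it} sin s) : t, s ∈ [0, 2π]}. -/
/-!
In the coordinates `u = z₁ + i z₂`, `v = z₁ - i z₂` the condition says that `u` and `v` lie on the
unit circle, i.e. `u = e^{iα}`, `v = e^{iβ}`. With `t = (α + β)/2` and `s = (α - β)/2` this is
exactly `z₁ = e^{it} cos s`, `z₂ = e^{it} sin s`, since `e^{it}(cos s ± i sin s) = e^{i(t ± s)}`.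
Both coordinates of the parametrization are `2π`-periodic in `t` and `s`, so the angles may be
taken in `[0, 2π]`.
-/

open Complex Real

noncomputable def bidiskBoundaryParam (t s : ℝ) : ℂ × ℂ :=
  (Complex.exp (Complex.I * t) * Real.cos s, Complex.exp (Complex.I * t) * Real.sin s)

lemma bidiskBoundaryParam_periodic_left (s : ℝ) :
    Function.Periodic (bidiskBoundaryParam · s) (2 * π) := fun t => by
  have h : exp (I * (t + 2 * π : ℝ)) = exp (I * t) := by
    push_cast
    rw [mul_comm I, mul_comm I]
    exact exp_mul_I_periodic t
  simp only [bidiskBoundaryParam, h]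

lemma bidiskBoundaryParam_periodic_right (t : ℝ) :
    Function.Periodic (bidiskBoundaryParam t) (2 * π) := fun s => by
  simp only [bidiskBoundaryParam, Real.cos_periodic s, Real.sin_periodic s]

lemma exists_mem_Icc_bidiskBoundaryParam_eq (t s : ℝ) :
    ∃ t' ∈ Set.Icc (0 : ℝ) (2 * π), ∃ s' ∈ Set.Icc (0 : ℝ) (2 * π),
      bidiskBoundaryParam t' s' = bidiskBoundaryParam t s := by
  obtain ⟨t', ht', hteq⟩ := (bidiskBoundaryParam_periodic_left s).exists_mem_Ico₀ two_pi_pos t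
  obtain ⟨s', hs', hseq⟩ := (bidiskBoundaryParam_periodic_right t').exists_mem_Ico₀ two_pi_pos s
  exact ⟨t', Set.Ico_subset_Icc_self ht', s', Set.Ico_subset_Icc_self hs', by rw [← hseq, hteq]⟩

lemma bidiskBoundaryParam_add_I_mul (t s : ℝ) :
    (bidiskBoundaryParam t s).1 + I * (bidiskBoundaryParam t s).2 = exp ((t + s : ℝ) * I) := by
  rw [ofReal_add, add_mul, Complex.exp_add, exp_mul_I (s : ℂ), ← ofReal_cos, ← ofReal_sin,
    bidiskBoundaryParam, mul_comm (t : ℂ) I]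
  ring

lemma bidiskBoundaryParam_sub_I_mul (t s : ℝ) :
    (bidiskBoundaryParam t s).1 - I * (bidiskBoundaryParam t s).2 = exp ((t - s : ℝ) * I) := by
  rw [sub_eq_add_neg t, ← bidiskBoundaryParam_add_I_mul, bidiskBoundaryParam, bidiskBoundaryParam,
    Real.cos_neg, Real.sin_neg]
  push_cast
  ring

lemma Prod.ext_of_add_I_mul_of_sub_I_mul {z w : ℂ × ℂ} (hadd : z.1 + I * z.2 = w.1 + I * w.2)
    (hsub : z.1 - I * z.2 = w.1 - I * w.2) : z = w := by
  have h₁ : z.1 = w.1 := by linear_combination (hadd + hsub) / 2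
  have h₂ : z.2 = w.2 := by linear_combination (-I) * (hadd - hsub) / 2 + (z.2 - w.2) * I_sq
  exact Prod.ext h₁ h₂

lemma norm_add_I_mul_eq_one_and_norm_sub_I_mul_eq_one_iff (p : ℂ × ℂ) :
    (‖p.1 + I * p.2‖ = 1 ∧ ‖p.1 - I * p.2‖ = 1) ↔ ∃ t s : ℝ, bidiskBoundaryParam t s = p := by
  constructor
  · rintro ⟨hu, hv⟩
    obtain ⟨α, hα⟩ := (norm_eq_one_iff _).1 hu
    obtain ⟨β, hβ⟩ := (norm_eq_one_iff _).1 hv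
    refine ⟨(α + β) / 2, (α - β) / 2, Prod.ext_of_add_I_mul_of_sub_I_mul ?_ ?_⟩
    · rw [bidiskBoundaryParam_add_I_mul, ← hα]; ring_nf
    · rw [bidiskBoundaryParam_sub_I_mul, ← hβ]; ring_nf
  · rintro ⟨t, s, rfl⟩
    rw [bidiskBoundaryParam_add_I_mul, bidiskBoundaryParam_sub_I_mul]
    exact ⟨norm_exp_ofReal_mul_I _, norm_exp_ofReal_mul_I _⟩

theorem stmt6 :
    {p : ℂ × ℂ | ‖p.1 + Complex.I * p.2‖ = 1 ∧
                 ‖p.1 - Complex.I * p.2‖ = 1} =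
      {p : ℂ × ℂ | ∃ t ∈ Set.Icc (0 : ℝ) (2 * π), ∃ s ∈ Set.Icc (0 : ℝ) (2 * π),
        p = (Complex.exp (Complex.I * t) * Real.cos s,
             Complex.exp (Complex.I * t) * Real.sin s)} := by
  ext p
  refine (norm_add_I_mul_eq_one_and_norm_sub_I_mul_eq_one_iff p).trans ⟨?_, ?_⟩
  · rintro ⟨t, s, rfl⟩
    obtain ⟨t', ht', s', hs', heq⟩ := exists_mem_Icc_bidiskBoundaryParam_eq t s
    exact ⟨t', ht', s', hs', heq.symm⟩
  · rintro ⟨t, -, s, -, rfl⟩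
    exact ⟨t, s, rfl⟩
end

section
/- Let f be in the scalar bicomplex Wiener algebra 𝔚, i.e. f(Z) = Σ_{n∈ℤ} f_n Zⁿ for Z ∈ ∂𝕂 with f_n ∈ BC and Σ_n ‖f_n‖ < ∞ (dual Lie norm). If f(Z) is invertible in BC for every Z ∈ ∂𝕂, then there exists g ∈ 𝔚 with f(Z)g(Z) = 1 for all Z ∈ ∂𝕂. -/
open Complex

/-- The bicomplex numbers, presented in idempotent coordinates as `ℂ × ℂ`
(componentwise ring structure). -/
abbrev BC : Type := ℂ × ℂ

/-- The imaginary unit `i` of `ℂ(i)` inside `BC`. -/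
noncomputable def BC.i : BC := (Complex.I, Complex.I)

/-- The second imaginary unit `j` of `BC`. -/
noncomputable def BC.j : BC := (-Complex.I, Complex.I)

/-- The hyperbolic unit `k = i·j`. -/
noncomputable def BC.k : BC := BC.i * BC.j

/-- The idempotent `e₁ = (1+k)/2`. -/
noncomputable def BC.e1 : BC := (1 + BC.k) / 2

/-- The idempotent `e₂ = (1−k)/2`. -/
noncomputable def BC.e2 : BC := (1 - BC.k) / 2


/-- The dual Lie norm `‖Z‖ = |λ₁| + |λ₂|` on the bicomplex numbers. -/
noncomputable def BC.dualLieNorm (Z : BC) : ℝ := ‖Z.1‖ + ‖Z.2‖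

/-- The distinguished boundary `∂𝕂 = {e^{it} e^{js} : t, s ∈ ℝ}`. -/
noncomputable def bdK : Set BC :=
  {Z | ∃ t s : ℝ,
    Z = Complex.exp (Complex.I * t) • ((Real.cos s : ℂ) • (1 : BC) + (Real.sin s : ℂ) • BC.j)}

/-!
In idempotent coordinates, `f = (f₁, f₂)` with `f₁, f₂ ∈ ℓ¹(ℤ)` and `∂𝕂` is the torus
`{(z₁, z₂) : |z₁| = |z₂| = 1}`, so the hypothesis says that neither Fourier series `f₁`, `f₂`
vanishes on the unit circle. This is Wiener's lemma, proved by Gelfand theory: `ℓ¹(ℤ)` under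
convolution is a commutative Banach algebra, a character `χ` is determined by `z = χ(δ₁)`, and
`‖χ‖ ≤ 1` applied to `δ₁` and `δ₋₁ = δ₁⁻¹` forces `|z| = 1`, so characters are evaluations on the
circle. A non-unit lies in the kernel of some character, hence `f₁` and `f₂` are invertible in
`ℓ¹(ℤ)`, and `g = (f₁⁻¹, f₂⁻¹)`.
-/

noncomputable section

def intConv {R : Type*} [NormedRing R] (f g : ℤ → R) (n : ℤ) : R := ∑' m, f m * g (n - m)

-- Reindexing by this takes the summand `f m * g (k - m)` of `intConv f g k` to `f a * g b`.
def Int.addShear : ℤ × ℤ ≃ ℤ × ℤ where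
  toFun p := (p.1 + p.2, p.1)
  invFun p := (p.2, p.1 - p.2)
  left_inv p := by simp
  right_inv p := by simp

section NormedRing

variable {R : Type*} [NormedRing R] {f g h : ℤ → R}

theorem summable_norm_intConv_summand (hf : Summable fun n => ‖f n‖)
    (hg : Summable fun n => ‖g n‖) : Summable fun p : ℤ × ℤ => ‖f p.2 * g (p.1 - p.2)‖ := by
  rw [← Int.addShear.summable_iff]
  simpa [Int.addShear, Function.comp_def] using hf.mul_norm hg

theorem norm_intConv_le (hf : Summable fun n => ‖f n‖) (hg : Summable fun n => ‖g n‖) (n : ℤ) :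
    ‖intConv f g n‖ ≤ intConv (fun n => ‖f n‖) (fun n => ‖g n‖) n := by
  have hnorm := (summable_norm_intConv_summand hf hg).prod_factor n
  have hreal := (summable_norm_intConv_summand (f := fun n => ‖f n‖) (g := fun n => ‖g n‖)
    (by simpa using hf) (by simpa using hg)).of_norm.prod_factor n
  exact (norm_tsum_le_tsum_norm hnorm).trans
    (hnorm.tsum_le_tsum (fun m => norm_mul_le _ _) hreal)

section Complete

variable [CompleteSpace R]

theorem summable_intConv_summand (hf : Summable fun n => ‖f n‖)
    (hg : Summable fun n => ‖g n‖) (n : ℤ) : Summable fun m => f m * g (n - m) :=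
  ((summable_norm_intConv_summand hf hg).prod_factor n).of_norm

theorem hasSum_intConv (hf : Summable fun n => ‖f n‖) (hg : Summable fun n => ‖g n‖) :
    HasSum (intConv f g) ((∑' n, f n) * ∑' n, g n) := by
  have hprod : HasSum (fun p : ℤ × ℤ => f p.2 * g (p.1 - p.2)) ((∑' n, f n) * ∑' n, g n) := by
    rw [tsum_mul_tsum_of_summable_norm hf hg, ← Int.addShear.hasSum_iff]
    simpa [Int.addShear, Function.comp_def] using (hf.mul_norm hg).of_norm.hasSum
  exact hprod.prod_fiberwise fun n => (hprod.summable.prod_factor n).hasSum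

theorem intConv_assoc (hf : Summable fun n => ‖f n‖) (hg : Summable fun n => ‖g n‖)
    (hh : Summable fun n => ‖h n‖) : intConv (intConv f g) h = intConv f (intConv g h) := by
  funext n
  have htriple : Summable fun p : ℤ × ℤ => f p.1 * g p.2 * h (n - p.1 - p.2) := by
    refine .of_norm_bounded ((hf.mul_norm hg).mul_right (∑' k, ‖h k‖)) fun p => ?_
    exact (norm_mul_le _ _).trans
      (mul_le_mul_of_nonneg_left (hh.le_tsum _ fun _ _ => norm_nonneg _) (norm_nonneg _))
  have htriple' : Summable fun q : ℤ × ℤ => f q.2 * g (q.1 - q.2) * h (n - q.1) := by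
    rw [← Int.addShear.summable_iff]
    simpa [Int.addShear, Function.comp_def, sub_sub] using htriple
  calc intConv (intConv f g) h n
      = ∑' k, ∑' m, f m * g (k - m) * h (n - k) := by
        refine tsum_congr fun k => ?_
        exact ((summable_intConv_summand hf hg k).tsum_mul_right _).symm
    _ = ∑' p : ℤ × ℤ, f p.1 * g p.2 * h (n - p.1 - p.2) := by
        rw [← htriple'.tsum_prod, ← Int.addShear.tsum_eq]
        simp [Int.addShear, sub_sub]
    _ = intConv f (intConv g h) n := by
        rw [htriple.tsum_prod]
        refine tsum_congr fun a => ?_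
        simp only [intConv, mul_assoc]
        exact (summable_intConv_summand hg hh (n - a)).tsum_mul_left _

theorem intConv_add (hf : Summable fun n => ‖f n‖) (hg : Summable fun n => ‖g n‖)
    (hh : Summable fun n => ‖h n‖) : intConv f (g + h) = intConv f g + intConv f h := by
  funext n
  simp only [intConv, Pi.add_apply, mul_add]
  exact (summable_intConv_summand hf hg n).tsum_add (summable_intConv_summand hf hh n)

end Complete

theorem summable_norm_intConv (hf : Summable fun n => ‖f n‖) (hg : Summable fun n => ‖g n‖) :
    Summable fun n => ‖intConv f g n‖ :=
  .of_nonneg_of_le (fun _ => norm_nonneg _) (norm_intConv_le hf hg)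
    (hasSum_intConv (by simpa using hf) (by simpa using hg)).summable

theorem tsum_norm_intConv_le (hf : Summable fun n => ‖f n‖) (hg : Summable fun n => ‖g n‖) :
    ∑' n, ‖intConv f g n‖ ≤ (∑' n, ‖f n‖) * ∑' n, ‖g n‖ := by
  have hreal := hasSum_intConv (f := fun n => ‖f n‖) (g := fun n => ‖g n‖)
    (by simpa using hf) (by simpa using hg)
  rw [← hreal.tsum_eq]
  exact (summable_norm_intConv hf hg).tsum_le_tsum (norm_intConv_le hf hg) hreal.summable

end NormedRing

theorem intConv_comm {R : Type*} [NormedCommRing R] (f g : ℤ → R) :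
    intConv f g = intConv g f := by
  funext n
  rw [intConv, ← (Equiv.subLeft n).tsum_eq]
  simp [intConv, mul_comm]

theorem intConv_single {R : Type*} [NormedRing R] (f : ℤ → R) (k : ℤ) :
    intConv f (Pi.single k 1) = fun n => f (n - k) := by
  funext n
  rw [intConv, tsum_eq_single (n - k) fun m hm => ?_]
  · simp
  · rw [Pi.single_eq_of_ne (by omega), mul_zero]

theorem intConv_mul_zpow {𝕜 : Type*} [NormedField 𝕜] (f g : ℤ → 𝕜) {z : 𝕜} (hz : z ≠ 0)
    (n : ℤ) :
    intConv (fun n => f n * z ^ n) (fun n => g n * z ^ n) n = intConv f g n * z ^ n := by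
  rw [intConv, intConv, ← tsum_mul_right]
  refine tsum_congr fun m => ?_
  rw [show z ^ n = z ^ m * z ^ (n - m) by rw [← zpow_add₀ hz, add_sub_cancel]]
  ring

abbrev WienerAlgebra : Type := lp (fun _ : ℤ => ℂ) 1

namespace WienerAlgebra

theorem summable_norm (x : WienerAlgebra) : Summable fun n => ‖x n‖ := by
  simpa using (memℓp_gen_iff (p := 1) (by norm_num)).1 x.2

theorem norm_eq_tsum (x : WienerAlgebra) : ‖x‖ = ∑' n, ‖x n‖ := by
  rw [lp.norm_eq_tsum_rpow (by norm_num)]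
  simp

def ofSummable (f : ℤ → ℂ) (hf : Summable fun n => ‖f n‖) : WienerAlgebra :=
  ⟨f, memℓp_gen (by simpa using hf)⟩

def single (k : ℤ) : WienerAlgebra := lp.single 1 k 1

instance : One WienerAlgebra := ⟨single 0⟩

instance : Mul WienerAlgebra :=
  ⟨fun x y => ofSummable (intConv x y) (summable_norm_intConv x.summable_norm y.summable_norm)⟩

theorem coe_one : ⇑(1 : WienerAlgebra) = Pi.single 0 1 := rfl

theorem coe_mul (x y : WienerAlgebra) : ⇑(x * y) = intConv x y := rfl

instance : CommRing WienerAlgebra :=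
  { (inferInstance : AddCommGroup WienerAlgebra) with
    mul_comm x y := lp.ext (intConv_comm x y)
    mul_assoc x y z := lp.ext (intConv_assoc x.summable_norm y.summable_norm z.summable_norm)
    one_mul x := lp.ext <| by rw [coe_mul, intConv_comm, coe_one, intConv_single]; simp
    mul_one x := lp.ext <| by rw [coe_mul, coe_one, intConv_single]; simp
    left_distrib x y z := lp.ext (intConv_add x.summable_norm y.summable_norm z.summable_norm)
    right_distrib x y z := lp.ext <| by
      simp only [coe_mul, lp.coeFn_add, intConv_comm _ (z : ℤ → ℂ)]
      exact intConv_add z.summable_norm x.summable_norm y.summable_norm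
    zero_mul x := lp.ext <| by funext n; simp [coe_mul, intConv]
    mul_zero x := lp.ext <| by funext n; simp [coe_mul, intConv] }

instance : NormedCommRing WienerAlgebra :=
  { (inferInstance : NormedAddCommGroup WienerAlgebra),
    (inferInstance : CommRing WienerAlgebra) with
    norm_mul_le x y := by
      simpa only [norm_eq_tsum, coe_mul] using
        tsum_norm_intConv_le x.summable_norm y.summable_norm }

instance : NormedAlgebra ℂ WienerAlgebra :=
  { Algebra.ofModule
      (fun c x y => lp.ext <| by funext n; simp [coe_mul, intConv, ← tsum_mul_left, mul_assoc])
      (fun c x y => lp.ext <| by funext n; simp [coe_mul, intConv, ← tsum_mul_left, mul_left_comm])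
    with norm_smul_le := norm_smul_le }

theorem norm_single (k : ℤ) : ‖single k‖ = 1 := by
  rw [single, lp.norm_single (by norm_num), norm_one]

instance : NormOneClass WienerAlgebra := ⟨norm_single 0⟩

theorem single_mul_single (a b : ℤ) : single a * single b = single (a + b) := by
  refine lp.ext ?_
  rw [coe_mul]
  simp only [single, lp.coeFn_single]
  rw [intConv_comm, intConv_single]
  funext n
  simp only [Pi.single_apply, sub_eq_iff_eq_add, add_comm b]

theorem smul_single (c : ℂ) (n : ℤ) : c • single n = lp.single 1 n c := by
  rw [single, ← lp.single_smul, smul_eq_mul, mul_one]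

def eval (x : WienerAlgebra) (z : ℂ) : ℂ := ∑' n, x n * z ^ n

section Eval

variable {z : ℂ}

theorem summable_norm_mul_zpow (x : WienerAlgebra) (hz : ‖z‖ = 1) :
    Summable fun n => ‖x n * z ^ n‖ := by
  simpa [hz] using x.summable_norm

theorem eval_mul (x y : WienerAlgebra) (hz : ‖z‖ = 1) : eval (x * y) z = eval x z * eval y z := by
  have hz0 : z ≠ 0 := by rintro rfl; simp at hz
  simp only [eval, coe_mul, ← intConv_mul_zpow _ _ hz0]
  exact (hasSum_intConv (summable_norm_mul_zpow x hz) (summable_norm_mul_zpow y hz)).tsum_eq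

theorem eval_one : eval 1 z = 1 := by
  rw [eval, tsum_eq_single 0 fun n hn => by simp [coe_one, hn]]
  simp [coe_one]

end Eval

open WeakDual

theorem exists_apply_single (χ : characterSpace ℂ WienerAlgebra) :
    ∃ z : ℂ, ‖z‖ = 1 ∧ ∀ k, χ (single k) = z ^ k := by
  have hle (k : ℤ) : ‖χ (single k)‖ ≤ 1 :=
    (spectrum.norm_le_norm_of_mem (CharacterSpace.apply_mem_spectrum χ _)).trans_eq
      (norm_single k)
  have hinv : χ (single 1) * χ (single (-1)) = 1 := by
    rw [← map_mul, single_mul_single, add_neg_cancel]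
    exact map_one χ
  have hnorm : ‖χ (single 1)‖ = 1 := by
    have := congrArg norm hinv
    rw [norm_mul, norm_one] at this
    nlinarith [hle 1, hle (-1), norm_nonneg (χ (single 1)), norm_nonneg (χ (single (-1)))]
  have hz0 : χ (single 1) ≠ 0 := by rw [← norm_ne_zero_iff, hnorm]; exact one_ne_zero
  refine ⟨χ (single 1), hnorm, fun k => ?_⟩
  induction k using Int.induction_on with
  | zero => exact map_one χ
  | succ k ih => rw [← single_mul_single, map_mul, ih, zpow_add_one₀ hz0]
  | pred k ih =>
    rw [sub_eq_add_neg, ← single_mul_single, map_mul, ih, ← sub_eq_add_neg, zpow_sub_one₀ hz0,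
      eq_inv_of_mul_eq_one_right hinv]

theorem exists_apply_eq_eval (χ : characterSpace ℂ WienerAlgebra) :
    ∃ z : ℂ, ‖z‖ = 1 ∧ ∀ x, χ x = eval x z := by
  obtain ⟨z, hz, hχ⟩ := exists_apply_single χ
  refine ⟨z, hz, fun x => ?_⟩
  have hsum := (lp.hasSum_single (by norm_num) x).map χ (map_continuous χ)
  simp only [Function.comp_def, ← smul_single, map_smul, hχ, smul_eq_mul] at hsum
  exact hsum.tsum_eq.symm

theorem isUnit_of_eval_ne_zero {x : WienerAlgebra} (hx : ∀ z : ℂ, ‖z‖ = 1 → eval x z ≠ 0) :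
    IsUnit x := by
  by_contra hu
  obtain ⟨χ, hχ⟩ := CharacterSpace.exists_apply_eq_zero hu
  obtain ⟨z, hz, hχz⟩ := exists_apply_eq_eval χ
  exact hx z hz (hχz x ▸ hχ)

end WienerAlgebra

end

open WienerAlgebra

theorem exp_smul_cos_add_sin_j (t s : ℝ) :
    (Complex.exp (Complex.I * t) • ((Real.cos s : ℂ) • (1 : BC) + (Real.sin s : ℂ) • BC.j) : BC)
      = (Complex.exp (↑(t - s) * Complex.I), Complex.exp (↑(t + s) * Complex.I)) := by
  rw [mul_comm Complex.I]
  refine Prod.ext ?_ ?_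
  · rw [Complex.ofReal_sub, sub_mul, sub_eq_add_neg, Complex.exp_add, ← neg_mul,
      ← Complex.cos_sub_sin_I]
    simp only [BC.j, Prod.smul_fst, Prod.fst_add, Prod.fst_one, smul_eq_mul, Complex.ofReal_cos,
      Complex.ofReal_sin]
    ring
  · rw [Complex.ofReal_add, add_mul, Complex.exp_add, ← Complex.cos_add_sin_I (s : ℂ)]
    simp only [BC.j, Prod.smul_snd, Prod.snd_add, Prod.snd_one, smul_eq_mul, Complex.ofReal_cos,
      Complex.ofReal_sin]
    ring

theorem bdK_eq : bdK = {Z : BC | ‖Z.1‖ = 1 ∧ ‖Z.2‖ = 1} := by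
  ext Z
  constructor
  · rintro ⟨t, s, rfl⟩
    rw [exp_smul_cos_add_sin_j]
    exact ⟨Complex.norm_exp_ofReal_mul_I _, Complex.norm_exp_ofReal_mul_I _⟩
  · rintro ⟨h₁, h₂⟩
    have hexp {z : ℂ} (hz : ‖z‖ = 1) : Complex.exp (z.arg * Complex.I) = z := by
      simpa [hz] using Complex.norm_mul_exp_arg_mul_I z
    refine ⟨(Z.1.arg + Z.2.arg) / 2, (Z.2.arg - Z.1.arg) / 2, ?_⟩
    rw [exp_smul_cos_add_sin_j,
      show (Z.1.arg + Z.2.arg) / 2 - (Z.2.arg - Z.1.arg) / 2 = Z.1.arg by ring,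
      show (Z.1.arg + Z.2.arg) / 2 + (Z.2.arg - Z.1.arg) / 2 = Z.2.arg by ring, hexp h₁, hexp h₂]

theorem tsum_pair_mul_zpow (x y : WienerAlgebra) {Z : BC} (h₁ : ‖Z.1‖ = 1) (h₂ : ‖Z.2‖ = 1) :
    ∑' n, ((x n, y n) : BC) * Z ^ n = (eval x Z.1, eval y Z.2) :=
  ((summable_norm_mul_zpow x h₁).of_norm.hasSum.prodMk
    (summable_norm_mul_zpow y h₂).of_norm.hasSum).tsum_eq

theorem exists_eq_pair_of_summable {f : ℤ → BC} (hf : Summable fun n => BC.dualLieNorm (f n)) :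
    ∃ x y : WienerAlgebra, f = fun n => (x n, y n) :=
  ⟨ofSummable (fun n => (f n).1) (hf.of_nonneg_of_le (fun _ => norm_nonneg _)
      fun _ => le_add_of_nonneg_right (norm_nonneg _)),
    ofSummable (fun n => (f n).2) (hf.of_nonneg_of_le (fun _ => norm_nonneg _)
      fun _ => le_add_of_nonneg_left (norm_nonneg _)), rfl⟩

theorem stmt14 (f : ℤ → BC) (hf : Summable fun n => BC.dualLieNorm (f n))
    (hinv : ∀ Z ∈ bdK, IsUnit (∑' n : ℤ, f n * Z ^ n)) :
    ∃ g : ℤ → BC, Summable (fun n => BC.dualLieNorm (g n)) ∧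
      ∀ Z ∈ bdK, (∑' n : ℤ, f n * Z ^ n) * (∑' n : ℤ, g n * Z ^ n) = 1 := by
  obtain ⟨x₁, x₂, rfl⟩ := exists_eq_pair_of_summable hf
  have heval_ne_zero (z : ℂ) (hz : ‖z‖ = 1) : eval x₁ z ≠ 0 ∧ eval x₂ z ≠ 0 := by
    have hunit := hinv (z, z) (by rw [bdK_eq]; exact ⟨hz, hz⟩)
    rw [tsum_pair_mul_zpow x₁ x₂ hz hz, Prod.isUnit_iff] at hunit
    exact ⟨hunit.1.ne_zero, hunit.2.ne_zero⟩
  obtain ⟨y₁, hy₁⟩ := (isUnit_of_eval_ne_zero fun z hz => (heval_ne_zero z hz).1).exists_right_inv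
  obtain ⟨y₂, hy₂⟩ := (isUnit_of_eval_ne_zero fun z hz => (heval_ne_zero z hz).2).exists_right_inv
  refine ⟨fun n => (y₁ n, y₂ n), y₁.summable_norm.add y₂.summable_norm, fun Z hZ => ?_⟩
  obtain ⟨h₁, h₂⟩ : ‖Z.1‖ = 1 ∧ ‖Z.2‖ = 1 := by rwa [bdK_eq] at hZ
  rw [tsum_pair_mul_zpow x₁ x₂ h₁ h₂, tsum_pair_mul_zpow y₁ y₂ h₁ h₂, Prod.mk_mul_mk,
    ← eval_mul _ _ h₁, ← eval_mul _ _ h₂, hy₁, hy₂, eval_one, eval_one, Prod.mk_one_one]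
end

section
/- For fixed a ∈ ℝ and t ∈ ℝ, the superoscillatory sequence F_m(t,a) = (cos(t/m) + i a sin(t/m))^m converges to e^{iat} as m → ∞, and the convergence is uniform on compact subsets of ℝ in the variable t. -/
/-!
With `s = t/m` we have `F_m(t,a) = G(s)^m` for `G(s) = cos s + i a sin s`, and
`e^{iat} = (e^{ias})^m`. Both `G(s)` and `e^{ias}` equal `1 + ias` up to `O(s²)`, and
`‖G(s)‖ ≤ e^{a²s²/2}`, so the telescoping bound `‖xᵐ - yᵐ‖ ≤ m M^{m-1} ‖x - y‖` gives
`‖F_m(t,a) - e^{iat}‖ = O(t² e^{a²t²/2} / m)`, uniformly for `t` in a bounded set.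
-/

open Complex Filter

/-- The superoscillatory sequence `F_m(t,a) = (cos(t/m) + i a sin(t/m))^m`. -/
noncomputable def supOsc (m : ℕ) (t a : ℝ) : ℂ :=
  (Complex.cos (t / m) + Complex.I * a * Complex.sin (t / m)) ^ m

theorem norm_pow_sub_pow_le {R : Type*} [SeminormedCommRing R] [NormOneClass R] {x y : R}
    {M : ℝ} (hx : ‖x‖ ≤ M) (hy : ‖y‖ ≤ M) (n : ℕ) :
    ‖x ^ n - y ^ n‖ ≤ n * M ^ (n - 1) * ‖x - y‖ := by
  rw [← geom_sum₂_mul]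
  refine (norm_mul_le _ _).trans (mul_le_mul_of_nonneg_right ?_ (norm_nonneg _))
  calc ‖∑ i ∈ Finset.range n, x ^ i * y ^ (n - 1 - i)‖
      ≤ ∑ i ∈ Finset.range n, ‖x‖ ^ i * ‖y‖ ^ (n - 1 - i) := by
        refine (norm_sum_le _ _).trans (Finset.sum_le_sum fun i _ => ?_)
        exact (norm_mul_le _ _).trans
          (mul_le_mul (norm_pow_le _ _) (norm_pow_le _ _) (norm_nonneg _) (by positivity))
    _ ≤ ∑ i ∈ Finset.range n, M ^ (n - 1) := Finset.sum_le_sum fun i hi => by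
        rw [← Nat.add_sub_cancel' (Nat.le_sub_one_of_lt (Finset.mem_range.1 hi)), pow_add,
          Nat.add_sub_cancel_left]
        have hM : 0 ≤ M := (norm_nonneg x).trans hx
        gcongr
    _ = n * M ^ (n - 1) := by simp

theorem norm_cos_add_I_mul_sin_sub_exp_le {a z : ℂ} (hz : ‖z‖ ≤ 1) (haz : ‖a * z‖ ≤ 1) :
    ‖cos z + I * a * sin z - exp (I * a * z)‖ ≤ (1 + ‖a‖ + ‖a‖ ^ 2) * ‖z‖ ^ 2 := by
  -- `cos z + I a sin z = (1 + a)/2 e^{iz} + (1 - a)/2 e^{-iz}` agrees with `e^{iaz}`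
  -- to first order.
  have hsplit : cos z + I * a * sin z - exp (I * a * z) =
      (1 + a) / 2 * (exp (I * z) - 1 - I * z) + (1 - a) / 2 * (exp (-I * z) - 1 - -I * z)
        - (exp (I * a * z) - 1 - I * a * z) := by
    rw [show I * z = z * I by ring, show -I * z = -z * I by ring, exp_mul_I, exp_mul_I,
      cos_neg, sin_neg]
    ring
  have hI : ‖I * z‖ = ‖z‖ := by simp
  have hnI : ‖-I * z‖ = ‖z‖ := by simp
  have haI : ‖I * a * z‖ = ‖a * z‖ := by rw [mul_assoc, norm_mul, norm_I, one_mul]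
  have h₁ := norm_exp_sub_one_sub_id_le (hI.trans_le hz)
  have h₂ := norm_exp_sub_one_sub_id_le (hnI.trans_le hz)
  have h₃ := norm_exp_sub_one_sub_id_le (haI.trans_le haz)
  rw [hI] at h₁
  rw [hnI] at h₂
  rw [haI, norm_mul] at h₃
  have hplus : ‖(1 + a) / 2‖ ≤ (1 + ‖a‖) / 2 := by
    rw [norm_div, RCLike.norm_ofNat]; gcongr; exact (norm_add_le _ _).trans (by simp)
  have hminus : ‖(1 - a) / 2‖ ≤ (1 + ‖a‖) / 2 := by
    rw [norm_div, RCLike.norm_ofNat]; gcongr; exact (norm_sub_le _ _).trans (by simp)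
  rw [hsplit]
  calc _ ≤ ‖(1 + a) / 2‖ * ‖exp (I * z) - 1 - I * z‖
        + ‖(1 - a) / 2‖ * ‖exp (-I * z) - 1 - -I * z‖ + ‖exp (I * a * z) - 1 - I * a * z‖ := by
        refine (norm_sub_le _ _).trans ?_
        rw [← norm_mul, ← norm_mul]
        gcongr
        exact norm_add_le _ _
    _ ≤ (1 + ‖a‖) / 2 * ‖z‖ ^ 2 + (1 + ‖a‖) / 2 * ‖z‖ ^ 2 + (‖a‖ * ‖z‖) ^ 2 := by gcongr
    _ = (1 + ‖a‖ + ‖a‖ ^ 2) * ‖z‖ ^ 2 := by ring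

theorem norm_cos_add_I_mul_sin_le (a s : ℝ) :
    ‖cos s + I * a * sin s‖ ≤ Real.exp (a ^ 2 * s ^ 2 / 2) := by
  have hsq : ‖cos s + I * a * sin s‖ ^ 2 ≤ Real.exp (a ^ 2 * s ^ 2 / 2) ^ 2 := by
    have hcart : cos s + I * a * sin s = (Real.cos s : ℂ) + ((a * Real.sin s : ℝ) : ℂ) * I := by
      push_cast; ring
    rw [hcart, norm_add_mul_I, Real.sq_sqrt (by positivity), ← Real.exp_nat_mul]
    calc Real.cos s ^ 2 + (a * Real.sin s) ^ 2 ≤ a ^ 2 * s ^ 2 + 1 := by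
          nlinarith [Real.sin_sq_add_cos_sq s, Real.sin_sq_le_sq (x := s), sq_nonneg a]
      _ ≤ Real.exp (a ^ 2 * s ^ 2) := Real.add_one_le_exp _
      _ = Real.exp ((2 : ℕ) * (a ^ 2 * s ^ 2 / 2)) := by push_cast; ring_nf
  exact (pow_le_pow_iff_left₀ (norm_nonneg _) (Real.exp_pos _).le two_ne_zero).1 hsq

theorem norm_supOsc_sub_exp_le (a t : ℝ) {m : ℕ} (hm : 0 < m) (ht : |t| ≤ m)
    (hat : |a * t| ≤ m) :
    ‖supOsc m t a - exp (I * a * t)‖ ≤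
      (1 + |a| + a ^ 2) * t ^ 2 * Real.exp (a ^ 2 * t ^ 2 / 2) / m := by
  have hm' : (0 : ℝ) < m := Nat.cast_pos.2 hm
  set s : ℝ := t / m with hs
  have hsup : supOsc m t a = (cos s + I * a * sin s) ^ m := by simp [supOsc, hs]
  have hexp : exp (I * a * t) = exp (I * a * s) ^ m := by
    have hmC : (m : ℂ) ≠ 0 := Nat.cast_ne_zero.2 hm.ne'
    rw [← exp_nat_mul, hs]; push_cast; field_simp
  set M := Real.exp (a ^ 2 * s ^ 2 / 2)
  have hM : 1 ≤ M := Real.one_le_exp (by positivity)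
  have hy : ‖exp (I * a * s)‖ ≤ M := by
    rwa [show I * a * s = ((a * s : ℝ) : ℂ) * I by push_cast; ring, norm_exp_ofReal_mul_I]
  have hMpow : M ^ (m - 1) ≤ Real.exp (a ^ 2 * t ^ 2 / 2) :=
    calc M ^ (m - 1) ≤ M ^ m := pow_le_pow_right₀ hM (Nat.sub_le m 1)
      _ = Real.exp (a ^ 2 * t ^ 2 / 2 / m) := by rw [← Real.exp_nat_mul, hs]; field_simp
      _ ≤ _ := Real.exp_le_exp.2 (div_le_self (by positivity) (Nat.one_le_cast.2 hm))
  have hdiff : ‖cos s + I * a * sin s - exp (I * a * s)‖ ≤ (1 + |a| + a ^ 2) * s ^ 2 := by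
    have hs1 : ‖(s : ℂ)‖ ≤ 1 := by
      rw [norm_real, Real.norm_eq_abs, hs, abs_div, abs_of_pos hm']
      exact div_le_one_of_le₀ ht hm'.le
    have has1 : ‖(a : ℂ) * s‖ ≤ 1 := by
      rw [← ofReal_mul, norm_real, Real.norm_eq_abs, hs, ← mul_div_assoc, abs_div, abs_of_pos hm']
      exact div_le_one_of_le₀ hat hm'.le
    simpa using norm_cos_add_I_mul_sin_sub_exp_le hs1 has1
  rw [hsup, hexp]
  calc _ ≤ m * M ^ (m - 1) * ‖cos s + I * a * sin s - exp (I * a * s)‖ :=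
        norm_pow_sub_pow_le (norm_cos_add_I_mul_sin_le a s) hy m
    _ ≤ m * Real.exp (a ^ 2 * t ^ 2 / 2) * ((1 + |a| + a ^ 2) * s ^ 2) := by gcongr
    _ = _ := by rw [hs]; field_simp

theorem tendstoUniformlyOn_supOsc_of_abs_le (a R : ℝ) {K : Set ℝ} (hK : ∀ t ∈ K, |t| ≤ R) :
    TendstoUniformlyOn (fun (m : ℕ) (t : ℝ) => supOsc m t a)
      (fun t : ℝ => exp (I * a * t)) atTop K := by
  set C := (1 + |a| + a ^ 2) * R ^ 2 * Real.exp (a ^ 2 * R ^ 2 / 2) with hC_def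
  rw [Metric.tendstoUniformlyOn_iff]
  intro ε hε
  have hC : ∀ᶠ m : ℕ in atTop, C / m < ε :=
    (tendsto_const_div_atTop_nhds_zero_nat C).eventually (gt_mem_nhds hε)
  filter_upwards [hC, eventually_gt_atTop 0, tendsto_natCast_atTop_atTop.eventually_ge_atTop R,
    tendsto_natCast_atTop_atTop.eventually_ge_atTop (|a| * R)] with m hCm hm hRm haRm t htK
  have ht := hK t htK
  have ht2 : t ^ 2 ≤ R ^ 2 := sq_le_sq' (neg_le_of_abs_le ht) (le_of_abs_le ht)
  rw [dist_comm, dist_eq_norm]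
  calc _ ≤ (1 + |a| + a ^ 2) * t ^ 2 * Real.exp (a ^ 2 * t ^ 2 / 2) / m :=
        norm_supOsc_sub_exp_le a t hm (ht.trans hRm)
          ((abs_mul a t).trans_le ((mul_le_mul_of_nonneg_left ht (abs_nonneg a)).trans haRm))
    _ ≤ C / m := by rw [hC_def]; gcongr
    _ < ε := hCm

theorem stmt17 (a : ℝ) :
    (∀ t : ℝ, Tendsto (fun m : ℕ => supOsc m t a) atTop
        (nhds (Complex.exp (Complex.I * a * t)))) ∧
    ∀ K : Set ℝ, IsCompact K →
      TendstoUniformlyOn (fun (m : ℕ) (t : ℝ) => supOsc m t a)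
        (fun t : ℝ => Complex.exp (Complex.I * a * t)) atTop K := by
  have uniform (K : Set ℝ) (hK : IsCompact K) :
      TendstoUniformlyOn (fun (m : ℕ) (t : ℝ) => supOsc m t a)
        (fun t : ℝ => exp (I * a * t)) atTop K :=
    let ⟨R, hR⟩ := hK.isBounded.exists_norm_le
    tendstoUniformlyOn_supOsc_of_abs_le a R hR
  exact ⟨fun t => tendstoUniformlyOn_singleton_iff_tendsto.1 (uniform {t} isCompact_singleton),
    uniform⟩
end
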